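/- arXiv:1807.01079 — 3 statements merged into one kernel-verified Lean document; each statement's English description precedes it below -/
import Mathlib

section
/- For a monotone (in the decision variables) constraint f(σ) ≥ θ, the naive propagator that fixes d to false, sets all other free variables to true, and removes false from the domain of d whenever the resulting value is below θ, is domain consistent: after propagation, for every remaining free variable v and each value b ∈ {⊥,⊤}, the partial assignment extended with v ↦ b can be completed to a full assignment satisfying f ≥ θ. -/
/-- Extend the partial assignment `σ'` (defined on `S`) with the values of `g`
on the free variables (those outside `S`). -/
def extend {ι : Type*} (S : Set ι) [DecidablePred (· ∈ S)] (σ' : ι → Bool)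
    (g : ι → Bool) : ι → Bool :=
  fun i => if i ∈ S then σ' i else g i

/-!
The witness for `v ↦ b` is `σ'` with `v ↦ b` and every other free variable true. It dominates
the completion that tests `v` for pruning, so by monotonicity it meets the threshold because `v`
was not pruned; and it sets every free variable other than `v` to true, so it respects all
prunings.
-/

section Extend

variable {ι : Type*} {S : Set ι} [DecidablePred (· ∈ S)] {σ' : ι → Bool}

theorem extend_of_mem {g : ι → Bool} {i : ι} (hi : i ∈ S) : extend S σ' g i = σ' i :=
  if_pos hi

theorem extend_of_notMem {g : ι → Bool} {i : ι} (hi : i ∉ S) : extend S σ' g i = g i :=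
  if_neg hi

theorem extend_mono : Monotone (extend S σ') := by
  intro g g' hg i
  by_cases hi : i ∈ S
  · simp only [extend_of_mem hi, le_refl]
  · simpa only [extend_of_notMem hi] using hg i

end Extend

theorem naive_propagator_domain_consistent_general {ι : Type*} [DecidableEq ι]
    (S : Set ι) [DecidablePred (· ∈ S)] (σ' : ι → Bool)
    (f : (ι → Bool) → ℝ) (hf : Monotone f) (θ : ℝ) :
    ∀ v ∉ S,
      θ ≤ f (extend S σ' (fun i => if i = v then false else true)) →
      ∀ b : Bool, ∃ τ : ι → Bool,
        (∀ i ∈ S, τ i = σ' i) ∧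
        τ v = b ∧
        (∀ d ∉ S,
          f (extend S σ' (fun i => if i = d then false else true)) < θ →
            τ d = true) ∧
        θ ≤ f τ := by
  intro v hv hv_kept b
  refine ⟨extend S σ' (fun i => if i = v then b else true), fun i hi => extend_of_mem hi,
    by simp [extend_of_notMem hv], ?_, ?_⟩
  · intro d hd hd_pruned
    have hdv : d ≠ v := by
      rintro rfl
      exact hd_pruned.not_ge hv_kept
    simp [extend_of_notMem hd, hdv]
  · have h_le : (fun i => if i = v then false else true) ≤ fun i => if i = v then b else true := by
      intro i
      dsimp only
      split_ifs <;> simp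
    exact hv_kept.trans (hf (extend_mono h_le))

/-- The naive propagator for a monotone constraint `f σ ≥ θ` is domain
consistent: assuming a satisfying completion of `σ'` exists (equivalently, the
all-true completion satisfies the constraint), then for every free variable `v`
that was not pruned (i.e. setting `v` to false and all other free variables to
true still meets the threshold) and every value `b : Bool`, there is a
completion of `σ'` with `v ↦ b` that respects all prunings (every pruned free
variable is true) and satisfies `f ≥ θ`. -/
theorem naive_propagator_domain_consistent {ι : Type*} [DecidableEq ι]
    (S : Set ι) [DecidablePred (· ∈ S)] (σ' : ι → Bool)
    (f : (ι → Bool) → ℝ) (hf : Monotone f) (θ : ℝ)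
    (hfeas : θ ≤ f (extend S σ' (fun _ => true))) :
    ∀ v ∉ S,
      θ ≤ f (extend S σ' (fun i => if i = v then false else true)) →
      ∀ b : Bool, ∃ τ : ι → Bool,
        (∀ i ∈ S, τ i = σ' i) ∧
        τ v = b ∧
        (∀ d ∉ S,
          f (extend S σ' (fun i => if i = d then false else true)) < θ →
            τ d = true) ∧
        θ ≤ f τ :=
  naive_propagator_domain_consistent_general S σ' f hf θ
end

section
/- If each stochastic variable t_i is independently true with probability p_i, then the OBDD evaluation v(root) equals the probability P(φ = ⊤ | σ), i.e., the measure of the set of samples of (t_1,…,t_k) making φ true under strategy σ. -/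
/-- A binary decision diagram (as a tree) over stochastic variables `S` and
decision variables `D`: leaves carry Boolean constants, internal nodes test one
variable; the hi-child corresponds to the tested variable being true. -/
inductive DT (S D : Type) : Type
  | leaf (b : Bool) : DT S D
  | snode (i : S) (hi lo : DT S D) : DT S D
  | dnode (j : D) (hi lo : DT S D) : DT S D

/-- The Boolean function `φ(τ, σ)` represented by the diagram, where `τ` is a
sample of the stochastic variables and `σ` the strategy fixing the decisions. -/
def DT.bval {S D : Type} (σ : D → Bool) (τ : S → Bool) : DT S D → Bool
  | .leaf b => b
  | .snode i hi lo => if τ i then hi.bval σ τ else lo.bval σ τ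
  | .dnode j hi lo => if σ j then hi.bval σ τ else lo.bval σ τ

/-- OBDD evaluation with stochastic weights `p i` and 0/1 decision weights
according to `σ`: `v(0)=0`, `v(1)=1`, stochastic node value
`p_i·v(hi)+(1-p_i)·v(lo)`, decision node value `v(hi)` if `σ` sets it true,
else `v(lo)`. -/
def DT.val {S D : Type} (σ : D → Bool) (p : S → ℝ) : DT S D → ℝ
  | .leaf b => if b then 1 else 0
  | .snode i hi lo => p i * hi.val σ p + (1 - p i) * lo.val σ p
  | .dnode j hi lo => if σ j then hi.val σ p else lo.val σ p

/-- The stochastic variables tested in the diagram. -/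
def DT.svars {S D : Type} [DecidableEq S] : DT S D → Finset S
  | .leaf _ => ∅
  | .snode i hi lo => insert i (hi.svars ∪ lo.svars)
  | .dnode _ hi lo => hi.svars ∪ lo.svars

/-- Read-once property of an OBDD: no stochastic variable is tested twice on
any root-to-leaf path. -/
def DT.readOnce {S D : Type} [DecidableEq S] : DT S D → Prop
  | .leaf _ => True
  | .snode i hi lo => i ∉ hi.svars ∧ i ∉ lo.svars ∧ hi.readOnce ∧ lo.readOnce
  | .dnode _ hi lo => hi.readOnce ∧ lo.readOnce

/-!
Induction on the diagram. Decision nodes are resolved by `σ`. At a stochastic node testing `i`,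
read-onceness makes the events of both subdiagrams depend only on the coordinates other than `i`,
which under the product measure are independent of coordinate `i`; hence
`P(φ) = p_i · P(φ_hi) + (1 - p_i) · P(φ_lo)`, the recursion defining `val`.
-/

open MeasureTheory ProbabilityTheory

theorem MeasurableSet.iSup_comap_eval_of_dependsOn {ι : Type*} {α : ι → Type*}
    [m : ∀ i, MeasurableSpace (α i)] [∀ i, Nonempty (α i)] {t : Set ι}
    {B : Set (∀ i, α i)} (hB : MeasurableSet B) (hBt : DependsOn (· ∈ B) t) :
    MeasurableSet[⨆ j ∈ t, (m j).comap (Function.eval j)] B := by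
  classical
  set mt := ⨆ j ∈ t, (m j).comap (Function.eval j)
  obtain ⟨a⟩ : Nonempty (∀ i, α i) := inferInstance
  let r : (∀ i, α i) → ∀ i, α i := fun x j => if j ∈ t then x j else a j
  have hr : @Measurable _ _ mt MeasurableSpace.pi r := by
    refine @measurable_pi_lambda _ ι α mt m r fun j => ?_
    by_cases hj : j ∈ t
    · simp only [r, hj, if_true]
      exact (comap_measurable (Function.eval j)).mono
        (le_iSup₂ (f := fun j _ => (m j).comap (Function.eval j)) j hj) le_rfl
    · simp only [r, hj, if_false]
      exact @measurable_const _ _ _ mt _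
  have hrB : r ⁻¹' B = B := by
    ext x
    exact Iff.of_eq (hBt fun j hj => by simp [r, hj])
  exact hrB ▸ hr hB

theorem MeasureTheory.Measure.pi_eval_preimage_inter_of_dependsOn {ι : Type*} [Fintype ι]
    {α : ι → Type*} [m : ∀ i, MeasurableSpace (α i)] (μ : ∀ i, Measure (α i))
    [∀ i, IsProbabilityMeasure (μ i)]
    {i : ι} {s : Set (α i)} (hs : MeasurableSet s) {B : Set (∀ j, α j)} (hB : MeasurableSet B)
    (hBi : DependsOn (· ∈ B) {i}ᶜ) :
    Measure.pi μ (Function.eval i ⁻¹' s ∩ B) = μ i s * Measure.pi μ B := by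
  have : ∀ j, Nonempty (α j) := fun j => nonempty_of_isProbabilityMeasure (μ j)
  have hind : Indep (⨆ j ∈ ({i} : Set ι), (m j).comap (Function.eval j))
      (⨆ j ∈ ({i}ᶜ : Set ι), (m j).comap (Function.eval j)) (Measure.pi μ) :=
    indep_iSup_of_disjoint (fun j => (measurable_pi_apply j).comap_le)
      (iIndepFun_pi (X := fun _ => id) fun _ => aemeasurable_id) disjoint_compl_right
  rw [(Indep_iff _ _ _).mp hind _ _ ?_ (hB.iSup_comap_eval_of_dependsOn hBi),
    (measurePreserving_eval μ i).measure_preimage hs.nullMeasurableSet]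
  exact le_iSup₂ (f := fun j (_ : j ∈ ({i} : Set ι)) => (m j).comap (Function.eval j)) i rfl _
    ⟨s, hs, rfl⟩

namespace DT

variable {S D : Type}

theorem dependsOn_bval [DecidableEq S] (σ : D → Bool) (T : DT S D) :
    DependsOn (T.bval σ) T.svars := by
  induction T with
  | leaf b => exact fun _ _ _ => rfl
  | snode i hi lo ihh ihl =>
    intro τ τ' h
    simp only [svars, Finset.coe_insert, Finset.coe_union, Set.mem_insert_iff, Set.mem_union,
      Finset.mem_coe] at h
    simp only [bval, h i (Or.inl rfl), ihh fun j hj => h j (Or.inr (Or.inl hj)),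
      ihl fun j hj => h j (Or.inr (Or.inr hj))]
  | dnode j hi lo ihh ihl =>
    intro τ τ' h
    simp only [svars, Finset.coe_union, Set.mem_union, Finset.mem_coe] at h
    simp only [bval, ihh fun j hj => h j (Or.inl hj), ihl fun j hj => h j (Or.inr hj)]

theorem val_nonneg (σ : D → Bool) {p : S → ℝ} (hp : ∀ i, 0 ≤ p i ∧ p i ≤ 1) (T : DT S D) :
    0 ≤ T.val σ p := by
  induction T with
  | leaf b => cases b <;> simp [val]
  | snode i hi lo ihh ihl =>
    exact add_nonneg (mul_nonneg (hp i).1 ihh) (mul_nonneg (sub_nonneg.mpr (hp i).2) ihl)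
  | dnode j hi lo ihh ihl => unfold val; split <;> assumption

theorem setOf_bval_snode (σ : D → Bool) (i : S) (hi lo : DT S D) :
    {τ | (snode i hi lo).bval σ τ = true} =
      Function.eval i ⁻¹' ({true} : Set Bool) ∩ {τ | hi.bval σ τ = true} ∪
        Function.eval i ⁻¹' ({false} : Set Bool) ∩ {τ | lo.bval σ τ = true} := by
  ext τ
  cases h : τ i <;> simp [bval, h]

theorem measure_pi_setOf_bval_eq_ofReal_val [Fintype S] [DecidableEq S] (σ : D → Bool)
    (ν : S → Measure Bool) [∀ i, IsProbabilityMeasure (ν i)] {p : S → ℝ}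
    (hp : ∀ i, 0 ≤ p i ∧ p i ≤ 1)
    (hν : ∀ i, ν i {true} = ENNReal.ofReal (p i)) {T : DT S D} (hro : T.readOnce) :
    Measure.pi ν {τ | T.bval σ τ = true} = ENNReal.ofReal (T.val σ p) := by
  induction T with
  | leaf b => cases b <;> simp [bval, val]
  | snode i hi lo ihh ihl =>
    obtain ⟨hih, hil, hrh, hrl⟩ := hro
    have hνf : ν i {false} = ENNReal.ofReal (1 - p i) := by
      rw [show ({false} : Set Bool) = {true}ᶜ by ext b; simp,
        prob_compl_eq_one_sub (measurableSet_singleton _), hν,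
        ENNReal.ofReal_sub _ (hp i).1, ENNReal.ofReal_one]
    have hdep : ∀ t : DT S D, i ∉ t.svars → DependsOn (· ∈ {τ | t.bval σ τ = true}) {i}ᶜ :=
      fun t hit τ τ' h => by
        simp only [Set.mem_ofPred_eq,
          (t.dependsOn_bval σ).mono (fun j hj (hji : j = i) => hit (hji ▸ hj)) h]
    have hmeas : ∀ A : Set (S → Bool), MeasurableSet A := fun A => A.toFinite.measurableSet
    rw [setOf_bval_snode, measure_union ?_ (hmeas _),
      Measure.pi_eval_preimage_inter_of_dependsOn ν (measurableSet_singleton _) (hmeas _)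
        (hdep hi hih),
      Measure.pi_eval_preimage_inter_of_dependsOn ν (measurableSet_singleton _) (hmeas _)
        (hdep lo hil),
      hν, hνf, ihh hrh, ihl hrl, val, ← ENNReal.ofReal_mul (hp i).1,
      ← ENNReal.ofReal_mul (sub_nonneg.mpr (hp i).2), ← ENNReal.ofReal_add]
    · exact mul_nonneg (hp i).1 (hi.val_nonneg σ hp)
    · exact mul_nonneg (sub_nonneg.mpr (hp i).2) (lo.val_nonneg σ hp)
    · exact ((Set.disjoint_singleton.mpr (by decide)).preimage _).mono
        Set.inter_subset_left Set.inter_subset_left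
  | dnode j hi lo ihh ihl =>
    cases hσ : σ j <;> simp only [bval, val, hσ, Bool.false_eq_true, if_true, if_false]
    exacts [ihl hro.2, ihh hro.1]

end DT

/-- If each stochastic variable `t_i` is independently true with probability
`p_i` (product of Bernoulli measures on `Bool^S`), then the OBDD evaluation
`v(root)` equals the probability `P(φ = ⊤ | σ)`, i.e. the measure of the set
of samples making the represented formula true under the strategy `σ`. -/
theorem DT.val_eq_probability {S D : Type} [Fintype S] [DecidableEq S]
    (T : DT S D) (σ : D → Bool) (p : S → ℝ)
    (hp : ∀ i, 0 ≤ p i ∧ p i ≤ 1) (hro : T.readOnce) :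
    MeasureTheory.Measure.pi
        (fun i : S =>
          (PMF.bernoulli (Real.toNNReal (p i))
            (Real.toNNReal_le_one.mpr (hp i).2)).toMeasure)
        {τ : S → Bool | T.bval σ τ = true} =
      ENNReal.ofReal (T.val σ p) := by
  refine DT.measure_pi_setOf_bval_eq_ofReal_val σ _ hp (fun i => ?_) hro
  rw [PMF.toMeasure_apply_singleton _ _ (measurableSet_singleton _), PMF.bernoulli_apply]
  rfl
end

section
/- The path-weight invariant of the top-down pass: after processing all nodes of levels < m in topological order in Algorithm 1, the accumulated quantity at each node r of level m equals the path weight π(r) as defined by the sum-over-valid-paths formula. -/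
/-!
A layered ordered decision diagram. Levels are indexed from the leaves upward:
level `0` consists of the leaves, level `i+1` consists of `k (i+1)` nodes, all
labeled with the same variable, whose hi- and lo-arcs point to nodes of level
`i`; the root is the unique node at level `n`. The arc weights are given per
level: `wh i` for the hi arc and `wl i` for the lo arc out of a node of level
`i`. (For a stochastic variable `wh i = w i` and `wl i = 1 - w i`; for a
decision variable that is true or free `wh i = 1` and `wl i = 0`, and for one
that is false `wh i = 0` and `wl i = 1`: invalid arcs carry weight `0`, so only
valid paths contribute.)
-/

/-- The accumulated quantity computed by the top-down pass of Algorithm 1: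
`π(root) = 1`, and each node in topological order adds `π(r)·(arc weight)` to
each of its children. -/
def pwAlg (n : ℕ) (k : ℕ → ℕ) (hi lo : ∀ i, Fin (k (i + 1)) → Fin (k i))
    (wh wl : ℕ → ℝ) (i : ℕ) (j : Fin (k i)) : ℝ :=
  if h : i < n then
    ∑ j' : Fin (k (i + 1)),
      ((if hi i j' = j then wh (i + 1) else 0) +
        (if lo i j' = j then wl (i + 1) else 0)) * pwAlg n k hi lo wh wl (i + 1) j'
  else 1
termination_by n - i

/-- The node of level `n - t` reached from the root by following, for `t` steps,
the hi arc where `b` is true and the lo arc where `b` is false. -/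
def walk (n : ℕ) (k : ℕ → ℕ) (hi lo : ∀ i, Fin (k (i + 1)) → Fin (k i))
    (root : Fin (k n)) (b : ℕ → Bool) : (t : ℕ) → t ≤ n → Fin (k (n - t))
  | 0, _ => root
  | t + 1, h =>
      let j : Fin (k ((n - (t + 1)) + 1)) :=
        cast (congrArg (fun z => Fin (k z)) (by omega : n - t = (n - (t + 1)) + 1))
          (walk n k hi lo root b t (Nat.le_of_succ_le h))
      if b t then hi (n - (t + 1)) j else lo (n - (t + 1)) j

/-- The weight of the root-to-node path determined by the choices `b`, followed
for `t` steps from the root: the product of the traversed arc weights. -/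
def pathWeight (n : ℕ) (wh wl : ℕ → ℝ) (b : ℕ → Bool) (t : ℕ) : ℝ :=
  ∏ s ∈ Finset.range t, (if b s then wh (n - s) else wl (n - s))

/-!
Both sides satisfy the same recursion in the depth `d = n - m`. A path of length `d + 1` into a
node `r` is a path of length `d` into some node `r'` followed by the hi or the lo arc from `r'`
to `r`, so summing over the last arc first turns the sum over paths into
`∑ r', w(r' → r) · π(r')`, which is the update rule of Algorithm 1. At depth `0` both sides are
`1`, because the root level has a single node.
-/

open Finset

universe u

def extendFalse {d : ℕ} (b : Fin d → Bool) : ℕ → Bool :=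
  fun s => if hs : s < d then b ⟨s, hs⟩ else false

lemma extendFalse_snoc {d : ℕ} (b : Fin d → Bool) (c : Bool) :
    extendFalse (Fin.snoc b c : Fin (d + 1) → Bool) = Function.update (extendFalse b) d c := by
  funext s
  rcases lt_trichotomy s d with hs | rfl | hs
  · simp [extendFalse, hs, Nat.lt_succ_of_lt hs, Fin.snoc, hs.ne]
  · simp [extendFalse, Fin.snoc]
  · simp [extendFalse, hs.not_gt, (Nat.succ_le_of_lt hs).not_gt, hs.ne']

lemma sum_extendFalse_succ {M : Type*} [AddCommMonoid M] (d : ℕ) (F : (ℕ → Bool) → M) :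
    ∑ b : Fin (d + 1) → Bool, F (extendFalse b) =
      ∑ b : Fin d → Bool, ∑ c : Bool, F (Function.update (extendFalse b) d c) := by
  rw [← (Fin.snocEquiv fun _ => Bool).sum_comp, Fintype.sum_prod_type_right]
  simp [Fin.snocEquiv, extendFalse_snoc]

lemma sum_mul_sum_ite_cast_eq {α β : Type u} {ι R : Type*} [Fintype α] [Fintype ι]
    [DecidableEq β] [CommSemiring R] (e : α = β) (A : α → R) (g : ι → β) (P : ι → R) :
    ∑ a, A a * ∑ i, (if g i = cast e a then P i else 0) = ∑ i, P i * A (cast e.symm (g i)) := by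
  subst e
  simp only [cast_eq, mul_sum, mul_ite, mul_zero]
  rw [sum_comm]
  simp [mul_comm]

section
variable (n : ℕ) (k : ℕ → ℕ) (hi lo : ∀ i, Fin (k (i + 1)) → Fin (k i)) (wh wl : ℕ → ℝ)

def arcWeight (i : ℕ) (j' : Fin (k (i + 1))) (j : Fin (k i)) : ℝ :=
  (if hi i j' = j then wh (i + 1) else 0) + (if lo i j' = j then wl (i + 1) else 0)

lemma arcWeight_eq_sum_bool (i : ℕ) (j' : Fin (k (i + 1))) (j : Fin (k i)) :
    arcWeight k hi lo wh wl i j' j =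
      ∑ c : Bool,
        if (if c then hi i j' else lo i j') = j then (if c then wh (i + 1) else wl (i + 1)) else 0 := by
  simp [arcWeight]

lemma pwAlg_of_lt {i : ℕ} (h : i < n) (j : Fin (k i)) :
    pwAlg n k hi lo wh wl i j =
      ∑ j', arcWeight k hi lo wh wl i j' j * pwAlg n k hi lo wh wl (i + 1) j' := by
  rw [pwAlg, dif_pos h]
  rfl

lemma pwAlg_of_not_lt {i : ℕ} (h : ¬ i < n) (j : Fin (k i)) : pwAlg n k hi lo wh wl i j = 1 := by
  rw [pwAlg, dif_neg h]

lemma pwAlg_cast {a b : ℕ} (e : a = b) (x : Fin (k a)) :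
    pwAlg n k hi lo wh wl b (cast (congrArg (fun z => Fin (k z)) e) x) =
      pwAlg n k hi lo wh wl a x := by
  subst e
  rfl

lemma walk_congr (root : Fin (k n)) {b b' : ℕ → Bool} (t : ℕ) (h : t ≤ n)
    (hbb : ∀ s < t, b s = b' s) :
    walk n k hi lo root b t h = walk n k hi lo root b' t h := by
  induction t with
  | zero => rfl
  | succ t ih =>
    simp only [walk]
    rw [ih (Nat.le_of_succ_le h) fun s hs => hbb s (by omega), hbb t (by omega)]

lemma walk_update_succ (root : Fin (k n)) (b : ℕ → Bool) (t : ℕ) (c : Bool) (h : t + 1 ≤ n) :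
    walk n k hi lo root (Function.update b t c) (t + 1) h =
      let j := cast (congrArg (fun z => Fin (k z)) (by omega : n - t = n - (t + 1) + 1))
        (walk n k hi lo root b t (Nat.le_of_succ_le h))
      if c then hi (n - (t + 1)) j else lo (n - (t + 1)) j := by
  rw [walk, walk_congr n k hi lo root t _ fun s hs => Function.update_of_ne hs.ne _ _,
    Function.update_self]

lemma pathWeight_congr {b b' : ℕ → Bool} (t : ℕ) (hbb : ∀ s < t, b s = b' s) :
    pathWeight n wh wl b t = pathWeight n wh wl b' t :=
  prod_congr rfl fun s hs => by rw [hbb s (mem_range.mp hs)]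

lemma pathWeight_update_succ (b : ℕ → Bool) (t : ℕ) (c : Bool) :
    pathWeight n wh wl (Function.update b t c) (t + 1) =
      pathWeight n wh wl b t * if c then wh (n - t) else wl (n - t) := by
  rw [pathWeight, prod_range_succ, ← pathWeight,
    pathWeight_congr n wh wl t fun s hs => Function.update_of_ne hs.ne _ _, Function.update_self]

def pathSum (root : Fin (k n)) (d : ℕ) (hd : d ≤ n) (j : Fin (k (n - d))) : ℝ :=
  ∑ b : Fin d → Bool,
    if walk n k hi lo root (extendFalse b) d hd = j then pathWeight n wh wl (extendFalse b) d else 0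

lemma pathSum_zero (hroot : k n = 1) (root : Fin (k n)) (j : Fin (k (n - 0))) :
    pathSum n k hi lo wh wl root 0 (Nat.zero_le n) j = 1 := by
  have : Subsingleton (Fin (k n)) := hroot ▸ inferInstance
  simp [pathSum, walk, pathWeight, Subsingleton.elim root j]

lemma pathSum_succ (root : Fin (k n)) (d : ℕ) (hd : d + 1 ≤ n) (j : Fin (k (n - (d + 1)))) :
    pathSum n k hi lo wh wl root (d + 1) hd j =
      ∑ b : Fin d → Bool, pathWeight n wh wl (extendFalse b) d *
        arcWeight k hi lo wh wl (n - (d + 1))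
          (cast (congrArg (fun z => Fin (k z)) (by omega : n - d = n - (d + 1) + 1))
            (walk n k hi lo root (extendFalse b) d (Nat.le_of_succ_le hd))) j := by
  have hw : ∀ c : Bool, (if c then wh (n - d) else wl (n - d)) =
      if c then wh (n - (d + 1) + 1) else wl (n - (d + 1) + 1) := by
    intro c
    rw [show n - (d + 1) + 1 = n - d by omega]
  refine (sum_extendFalse_succ d fun b =>
    if walk n k hi lo root b (d + 1) hd = j then pathWeight n wh wl b (d + 1) else 0).trans ?_
  refine sum_congr rfl fun b _ => ?_
  simp only [walk_update_succ, pathWeight_update_succ, hw, arcWeight_eq_sum_bool, mul_sum]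
  refine sum_congr rfl fun c _ => ?_
  split_ifs <;> simp

theorem pwAlg_sub_eq_pathSum (hroot : k n = 1) (root : Fin (k n)) :
    ∀ (d : ℕ) (hd : d ≤ n) (j : Fin (k (n - d))),
      pwAlg n k hi lo wh wl (n - d) j = pathSum n k hi lo wh wl root d hd j
  | 0, _, j => by
    rw [pwAlg_of_not_lt n k hi lo wh wl (by omega), pathSum_zero n k hi lo wh wl hroot]
  | d + 1, hd, j => by
    have hE : n - (d + 1) + 1 = n - d := by omega
    have ih (j' : Fin (k (n - (d + 1) + 1))) : pwAlg n k hi lo wh wl (n - (d + 1) + 1) j' =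
        pathSum n k hi lo wh wl root d (by omega) (cast (congrArg (fun z => Fin (k z)) hE) j') := by
      rw [← pwAlg_cast n k hi lo wh wl hE, pwAlg_sub_eq_pathSum hroot root d]
    rw [pwAlg_of_lt n k hi lo wh wl (by omega), pathSum_succ]
    simp only [ih, pathSum]
    exact sum_mul_sum_ite_cast_eq _ _ _ _

end

/-- Invariant of the top-down pass of Algorithm 1: after processing all levels
above level `m` in topological order, the accumulated quantity at each node `r`
of level `m` equals the path weight `π(r)` given by the sum-over-paths formula:
the sum, over all root-to-`r` paths, of the products of the arc weights. -/
theorem pwAlg_eq_sum_over_paths (n : ℕ) (k : ℕ → ℕ)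
    (hi lo : ∀ i, Fin (k (i + 1)) → Fin (k i)) (wh wl : ℕ → ℝ)
    (hroot : k n = 1) (root : Fin (k n)) (m : ℕ) (hm : m ≤ n) (r : Fin (k m)) :
    pwAlg n k hi lo wh wl m r =
      ∑ b : Fin (n - m) → Bool,
        if walk n k hi lo root (fun s => if hs : s < n - m then b ⟨s, hs⟩ else false)
              (n - m) (Nat.sub_le n m) =
            cast (congrArg (fun z => Fin (k z)) (by omega : m = n - (n - m))) r then
          pathWeight n wh wl (fun s => if hs : s < n - m then b ⟨s, hs⟩ else false) (n - m)
        else 0 := by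
  rw [← pwAlg_cast n k hi lo wh wl (by omega : m = n - (n - m)) r]
  exact pwAlg_sub_eq_pathSum n k hi lo wh wl hroot root (n - m) (Nat.sub_le n m) _
end
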